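/- Let N ≥ 1, let c, τ > 0, let σ be the uniform probability measure on the unit sphere S^{N−1} of ℝ^N, and for R ≥ 0 define (T_R u)(x) := ∫_{S^{N−1}} u(x + R·y) dσ(y). Let u : ℝ^N → ℝ be continuously differentiable and bounded with bounded gradient, and define the causal diffusion v by v(x,0) := u(x) and v(x,t) := (T_{R(t)}((T_{cτ})^{n(t)} u))(x) for t > 0, where n(t) is the unique m ∈ ℕ with mτ < t ≤ (m+1)τ and R(t) := c(t − n(t)τ). Then for every x ∈ ℝ^N and every m ∈ ℕ, the map t ↦ v(x,t) has right-hand derivative 0 at t = m·τ; that is, lim_{s→0+} (v(x, mτ + s) − v(x, mτ))/s = 0. -/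

import Mathlib

open MeasureTheory

/-- The uniform probability measure on the unit sphere of `ℝ^N`, viewed as a measure
on `ℝ^N` (the normalized surface measure, pushed forward along the inclusion). -/
noncomputable def sphereUniform (N : ℕ) : Measure (EuclideanSpace ℝ (Fin N)) :=
  ((volume : Measure (EuclideanSpace ℝ (Fin N))).toSphere Set.univ)⁻¹ •
    Measure.map (Subtype.val : Metric.sphere (0 : EuclideanSpace ℝ (Fin N)) 1 → _)
      (volume : Measure (EuclideanSpace ℝ (Fin N))).toSphere

/-- The spherical mean operator `(T_R u)(x) = ∫_{S^{N-1}} u (x + R y) dσ(y)`. -/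
noncomputable def sphMean (N : ℕ) (R : ℝ) (u : EuclideanSpace ℝ (Fin N) → ℝ)
    (x : EuclideanSpace ℝ (Fin N)) : ℝ :=
  ∫ y, u (x + R • y) ∂(sphereUniform N)
/-- For `t, τ > 0`, the unique `m ∈ ℕ` with `m τ < t ≤ (m+1) τ`. -/
noncomputable def stepIndex (τ t : ℝ) : ℕ := ⌈t / τ⌉₊ - 1

/-- The causal diffusion model with speed `c` and period `τ`:
`v(x,t) = (T_{R(t)} ((T_{cτ})^{n(t)} u)) x` for `t > 0` (where `n(t)` is the unique
natural number with `n(t) τ < t ≤ (n(t)+1) τ` and `R(t) = c (t - n(t) τ)`), and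
`v(x,0) = u(x)`. -/
noncomputable def causalDiffusion (N : ℕ) (c τ : ℝ) (u : EuclideanSpace ℝ (Fin N) → ℝ)
    (x : EuclideanSpace ℝ (Fin N)) (t : ℝ) : ℝ :=
  if t ≤ 0 then u x
  else sphMean N (c * (t - stepIndex τ t * τ)) ((sphMean N (c * τ))^[stepIndex τ t] u) x

/-!
The spherical means `T_R` commute (Fubini) and do not increase Lipschitz constants. For `w`
Lipschitz and differentiable at `x`, dominated convergence gives
`(T_r w x - w x) / r → ∫ Dw(x) y dσ(y) = 0` as `r → 0⁺`, the integral vanishing because `σ` is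
symmetric. This vanishing right slope passes from `w` to `T_R w`, since
`T_r (T_R w) - T_R w = T_R (T_r w - w)` and `|T_r w - w| ≤ K r` for `w` `K`-Lipschitz; so it holds
for every `w_m = T_{cτ}^m u`. Finally `v(x, mτ + s) = T_{cs} w_m x` for `0 < s ≤ τ` and
`v(x, mτ) = w_m x`.
-/

open Filter Set Metric Topology
open scoped Pointwise NNReal

namespace MeasureTheory.Measure

variable {E : Type*} [NormedAddCommGroup E] [NormedSpace ℝ E] [MeasurableSpace E] [BorelSpace E]

theorem map_toSphere_apply (μ : Measure E) {s : Set E} (hs : MeasurableSet s) :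
    μ.toSphere.map ((↑) : sphere (0 : E) 1 → E) s =
      Module.finrank ℝ E * μ (Ioo (0 : ℝ) 1 • (s ∩ sphere 0 1)) := by
  rw [map_apply measurable_subtype_coe hs, toSphere_apply' _ (measurable_subtype_coe hs),
    image_preimage_eq_inter_range, Subtype.range_coe]

instance isNegInvariant_map_toSphere (μ : Measure E) [μ.IsNegInvariant] :
    (μ.toSphere.map ((↑) : sphere (0 : E) 1 → E)).IsNegInvariant := by
  refine ⟨ext fun s hs => ?_⟩
  rw [neg_def, map_apply measurable_neg hs, show Neg.neg ⁻¹' s = -s from rfl,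
    map_toSphere_apply _ hs.neg, map_toSphere_apply _ hs, ← measure_neg (μ := μ),
    ← Set.smul_neg]
  simp only [inter_neg, neg_neg, neg_sphere, neg_zero]

end MeasureTheory.Measure

namespace sphereUniform

variable {N : ℕ}

instance : (sphereUniform N).IsNegInvariant := by
  refine ⟨?_⟩
  rw [Measure.neg_def, sphereUniform, Measure.map_smul, ← Measure.neg_def, Measure.neg_eq_self]

instance [NeZero N] : IsProbabilityMeasure (sphereUniform N) := by
  refine ⟨?_⟩
  rw [sphereUniform, Measure.smul_apply, Measure.map_apply measurable_subtype_coe .univ,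
    preimage_univ, smul_eq_mul, ENNReal.inv_mul_cancel (Measure.measure_univ_ne_zero.2 ?_)
      (measure_ne_top _ _)]
  exact Measure.toSphere_ne_zero _

theorem ae_norm_eq_one : ∀ᵐ y ∂(sphereUniform N), ‖y‖ = 1 := by
  refine Measure.ae_smul_measure ?_ _
  rw [(MeasurableEmbedding.subtype_coe isClosed_sphere.measurableSet).ae_map_iff]
  exact ae_of_all _ fun y => by simp

theorem integral_id : ∫ y, y ∂(sphereUniform N) = 0 := by
  have h := integral_neg_eq_self (fun y => y) (sphereUniform N)
  rw [integral_neg, neg_eq_iff_add_eq_zero, ← two_smul ℝ] at h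
  exact (smul_eq_zero.1 h).resolve_left two_ne_zero

theorem integral_continuousLinearMap [NeZero N] (f : EuclideanSpace ℝ (Fin N) →L[ℝ] ℝ) :
    ∫ y, f y ∂(sphereUniform N) = 0 := by
  have hid : Integrable (fun y => y) (sphereUniform N) :=
    Integrable.of_bound (by fun_prop) 1 (ae_norm_eq_one.mono fun _ hy => hy.le)
  rw [f.integral_comp_comm hid, integral_id, map_zero]

end sphereUniform

section sphMean

variable {N : ℕ} {K : ℝ≥0} {w : EuclideanSpace ℝ (Fin N) → ℝ}

theorem ae_abs_comp_add_smul_sub_le (hw : LipschitzWith K w) (x : EuclideanSpace ℝ (Fin N))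
    (R : ℝ) : ∀ᵐ y ∂(sphereUniform N), |w (x + R • y) - w x| ≤ K * |R| := by
  filter_upwards [sphereUniform.ae_norm_eq_one] with y hy
  simpa [← Real.dist_eq, norm_smul, hy] using hw.dist_le_mul (x + R • y) x

variable [NeZero N]

theorem integrable_comp_add_smul (hw : LipschitzWith K w) (x : EuclideanSpace ℝ (Fin N))
    (R : ℝ) : Integrable (fun y => w (x + R • y)) (sphereUniform N) := by
  have := hw.continuous
  refine Integrable.of_bound (by fun_prop) (|w x| + K * |R|) ?_
  filter_upwards [ae_abs_comp_add_smul_sub_le hw x R] with y hy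
  rw [Real.norm_eq_abs]
  linarith [abs_sub_abs_le_abs_sub (w (x + R • y)) (w x)]

theorem sphMean_sub_self (hw : LipschitzWith K w) (x : EuclideanSpace ℝ (Fin N)) (R : ℝ) :
    sphMean N R w x - w x = ∫ y, (w (x + R • y) - w x) ∂(sphereUniform N) := by
  rw [integral_sub (integrable_comp_add_smul hw x R) (integrable_const _), integral_const,
    probReal_univ, one_smul, sphMean]

theorem abs_sphMean_sub_self_le (hw : LipschitzWith K w) (x : EuclideanSpace ℝ (Fin N))
    (R : ℝ) : |sphMean N R w x - w x| ≤ K * |R| := by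
  rw [sphMean_sub_self hw, ← Real.norm_eq_abs]
  refine (norm_integral_le_of_norm_le_const (C := K * |R|) ?_).trans_eq (by simp)
  simpa only [Real.norm_eq_abs] using ae_abs_comp_add_smul_sub_le hw x R

theorem lipschitzWith_sphMean (hw : LipschitzWith K w) (R : ℝ) :
    LipschitzWith K (sphMean N R w) := by
  refine LipschitzWith.of_dist_le_mul fun a b => ?_
  rw [dist_eq_norm, sphMean, sphMean,
    ← integral_sub (integrable_comp_add_smul hw a R) (integrable_comp_add_smul hw b R)]
  refine (norm_integral_le_of_norm_le_const (C := K * dist a b)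
    (ae_of_all _ fun y => ?_)).trans_eq (by simp)
  simpa [dist_eq_norm] using hw.dist_le_mul (a + R • y) (b + R • y)

theorem sphMean_comm (hw : LipschitzWith K w) (R R' : ℝ) :
    sphMean N R (sphMean N R' w) = sphMean N R' (sphMean N R w) := by
  funext x
  have hint : Integrable (fun q : _ × _ => w (x + (R • q.1 + R' • q.2)))
      ((sphereUniform N).prod (sphereUniform N)) := by
    have := hw.continuous
    refine Integrable.of_bound (by fun_prop) (|w x| + K * (|R| + |R'|)) ?_
    filter_upwards [Measure.quasiMeasurePreserving_fst.ae sphereUniform.ae_norm_eq_one,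
      Measure.quasiMeasurePreserving_snd.ae sphereUniform.ae_norm_eq_one] with q h₁ h₂
    have hn : ‖R • q.1 + R' • q.2‖ ≤ |R| + |R'| := by
      simpa [norm_smul, h₁, h₂] using norm_add_le (R • q.1) (R' • q.2)
    have hL := hw.dist_le_mul (x + (R • q.1 + R' • q.2)) x
    rw [Real.dist_eq, dist_eq_norm, add_sub_cancel_left] at hL
    rw [Real.norm_eq_abs]
    nlinarith [abs_sub_abs_le_abs_sub (w (x + (R • q.1 + R' • q.2))) (w x), K.2]
  simp only [sphMean, ← add_assoc] at hint ⊢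
  rw [integral_integral_swap hint]
  simp only [add_right_comm]

end sphMean

theorem norm_div_le_of_abs_le_mul {a r K : ℝ} (hr : r ≠ 0) (h : |a| ≤ K * |r|) :
    ‖a / r‖ ≤ K := by
  rwa [norm_div, Real.norm_eq_abs, Real.norm_eq_abs, div_le_iff₀ (abs_pos.2 hr)]

section slope

variable {N : ℕ} [NeZero N] {K : ℝ≥0} {w : EuclideanSpace ℝ (Fin N) → ℝ}

theorem tendsto_sphMean_slope_of_differentiableAt (hw : LipschitzWith K w)
    {x : EuclideanSpace ℝ (Fin N)} (hx : DifferentiableAt ℝ w x) :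
    Tendsto (fun r => (sphMean N r w x - w x) / r) (𝓝[>] 0) (𝓝 0) := by
  have := hw.continuous
  simp_rw [sphMean_sub_self hw, ← integral_div]
  rw [show 𝓝 (0 : ℝ) = 𝓝 (∫ y, fderiv ℝ w x y ∂(sphereUniform N)) by
    rw [sphereUniform.integral_continuousLinearMap]]
  refine tendsto_integral_filter_of_dominated_convergence (fun _ => K)
    (Eventually.of_forall fun r => by fun_prop) ?_ (integrable_const _) (ae_of_all _ fun y => ?_)
  · filter_upwards [self_mem_nhdsWithin] with r hr
    filter_upwards [ae_abs_comp_add_smul_sub_le hw x r] with y hy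
    exact norm_div_le_of_abs_le_mul hr.ne' hy
  · have hline : HasDerivAt (fun r : ℝ => w (x + r • y)) (fderiv ℝ w x y) 0 := by
      have h := hx.hasFDerivAt.comp_hasDerivAt_of_eq 0
        (((hasDerivAt_id (0 : ℝ)).smul_const y).const_add x) (by simp)
      rwa [one_smul] at h
    refine ((hasDerivWithinAt_iff_tendsto_slope' (lt_irrefl 0)).1
      (hline.hasDerivWithinAt (s := Ioi 0))).congr fun r => ?_
    simp [slope_def_field]

theorem tendsto_sphMean_slope_sphMean (hw : LipschitzWith K w)
    (hslope : ∀ x, Tendsto (fun r => (sphMean N r w x - w x) / r) (𝓝[>] 0) (𝓝 0))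
    (R : ℝ) (x : EuclideanSpace ℝ (Fin N)) :
    Tendsto (fun r => (sphMean N r (sphMean N R w) x - sphMean N R w x) / r) (𝓝[>] 0) (𝓝 0) := by
  have hsub (r : ℝ) : sphMean N r (sphMean N R w) x - sphMean N R w x =
      ∫ y, (sphMean N r w (x + R • y) - w (x + R • y)) ∂(sphereUniform N) := by
    rw [sphMean_comm hw, sphMean, sphMean, integral_sub
      (integrable_comp_add_smul (lipschitzWith_sphMean hw r) x R) (integrable_comp_add_smul hw x R)]
  simp_rw [hsub, ← integral_div]
  rw [show 𝓝 (0 : ℝ) = 𝓝 (∫ _, (0 : ℝ) ∂(sphereUniform N)) by rw [integral_zero]]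
  refine tendsto_integral_filter_of_dominated_convergence (fun _ => K)
    (Eventually.of_forall fun r => ?_) ?_ (integrable_const _)
    (ae_of_all _ fun y => hslope (x + R • y))
  · have := hw.continuous
    have := (lipschitzWith_sphMean hw r).continuous
    fun_prop
  · filter_upwards [self_mem_nhdsWithin] with r hr
    exact ae_of_all _ fun _ => norm_div_le_of_abs_le_mul hr.ne' (abs_sphMean_sub_self_le hw _ r)

theorem lipschitzWith_iterate_sphMean (hw : LipschitzWith K w) (R : ℝ) (m : ℕ) :
    LipschitzWith K ((sphMean N R)^[m] w) := by
  induction m with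
  | zero => exact hw
  | succ k ih => simpa only [Function.iterate_succ_apply'] using lipschitzWith_sphMean ih R

theorem tendsto_iterate_sphMean_slope (hw : LipschitzWith K w) (hd : Differentiable ℝ w)
    (R : ℝ) (m : ℕ) (x : EuclideanSpace ℝ (Fin N)) :
    Tendsto (fun r => (sphMean N r ((sphMean N R)^[m] w) x - (sphMean N R)^[m] w x) / r)
      (𝓝[>] 0) (𝓝 0) := by
  induction m generalizing x with
  | zero => exact tendsto_sphMean_slope_of_differentiableAt hw (hd x)
  | succ k ih =>
    simp only [Function.iterate_succ_apply']
    exact tendsto_sphMean_slope_sphMean (lipschitzWith_iterate_sphMean hw R k) ih R x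

end slope

section causalDiffusion

variable {N : ℕ} {c τ : ℝ} {u : EuclideanSpace ℝ (Fin N) → ℝ} {x : EuclideanSpace ℝ (Fin N)}

theorem stepIndex_natCast_mul_add (hτ : 0 < τ) (m : ℕ) {s : ℝ} (hs : 0 < s) (hsτ : s ≤ τ) :
    stepIndex τ (m * τ + s) = m := by
  have hceil : ⌈(m * τ + s) / τ⌉₊ = m + 1 := by
    rw [add_div, mul_div_cancel_right₀ _ hτ.ne', Nat.ceil_eq_iff (Nat.succ_ne_zero m)]
    push_cast
    constructor
    · linarith [div_pos hs hτ]
    · linarith [(div_le_one hτ).2 hsτ]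
  rw [stepIndex, hceil, Nat.add_sub_cancel]

theorem causalDiffusion_natCast_mul_add (hτ : 0 < τ) (m : ℕ) {s : ℝ} (hs : 0 < s)
    (hsτ : s ≤ τ) :
    causalDiffusion N c τ u x (m * τ + s) =
      sphMean N (c * s) ((sphMean N (c * τ))^[m] u) x := by
  rw [causalDiffusion, if_neg (not_le.2 (by positivity)),
    stepIndex_natCast_mul_add hτ m hs hsτ, add_sub_cancel_left]

theorem causalDiffusion_natCast_mul (hτ : 0 < τ) (m : ℕ) :
    causalDiffusion N c τ u x (m * τ) = (sphMean N (c * τ))^[m] u x := by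
  cases m with
  | zero => simp [causalDiffusion]
  | succ k =>
    rw [Nat.cast_succ, add_one_mul, causalDiffusion_natCast_mul_add hτ k hτ le_rfl,
      Function.iterate_succ_apply']

end causalDiffusion

theorem stmt_16_general (N : ℕ) (hN : 1 ≤ N) (c τ : ℝ) (hc : 0 < c) (hτ : 0 < τ)
    (u : EuclideanSpace ℝ (Fin N) → ℝ) (hu : ContDiff ℝ 1 u)
    (hgb : ∃ C : ℝ, ∀ x, ‖fderiv ℝ u x‖ ≤ C)
    (x : EuclideanSpace ℝ (Fin N)) (m : ℕ) :
    Filter.Tendsto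
      (fun s => (causalDiffusion N c τ u x ((m : ℝ) * τ + s) -
          causalDiffusion N c τ u x ((m : ℝ) * τ)) / s)
      (nhdsWithin 0 (Set.Ioi 0)) (nhds 0) := by
  have : NeZero N := ⟨by omega⟩
  obtain ⟨C, hC⟩ := hgb
  have hd : Differentiable ℝ u := hu.differentiable one_ne_zero
  have hLip : LipschitzWith C.toNNReal u := lipschitzWith_of_nnnorm_fderiv_le hd fun y => by
    rw [← NNReal.coe_le_coe, coe_nnnorm, Real.coe_toNNReal']
    exact (hC y).trans (le_max_left _ _)
  have hspeed : Tendsto (c * ·) (𝓝[>] (0 : ℝ)) (𝓝[>] 0) :=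
    tendsto_iff_comap.2 (comap_mulLeft_nhdsGT_zero hc).ge
  have hslope := ((tendsto_iterate_sphMean_slope hLip hd (c * τ) m x).comp hspeed).const_mul c
  rw [mul_zero] at hslope
  refine hslope.congr' ?_
  filter_upwards [Ioc_mem_nhdsGT hτ] with s hs
  rw [causalDiffusion_natCast_mul_add hτ m hs.1 hs.2, causalDiffusion_natCast_mul hτ]
  simp only [Function.comp_apply]
  field_simp [hc.ne', hs.1.ne']

/-- For `C¹` bounded initial data with bounded gradient, the causal diffusion
`t ↦ v(x,t)` has right-hand derivative `0` at each time point `t = m τ`. -/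
theorem stmt_16 (N : ℕ) (hN : 1 ≤ N) (c τ : ℝ) (hc : 0 < c) (hτ : 0 < τ)
    (u : EuclideanSpace ℝ (Fin N) → ℝ) (hu : ContDiff ℝ 1 u)
    (hub : ∃ C : ℝ, ∀ x, |u x| ≤ C)
    (hgb : ∃ C : ℝ, ∀ x, ‖fderiv ℝ u x‖ ≤ C)
    (x : EuclideanSpace ℝ (Fin N)) (m : ℕ) :
    Filter.Tendsto
      (fun s => (causalDiffusion N c τ u x ((m : ℝ) * τ + s) -
          causalDiffusion N c τ u x ((m : ℝ) * τ)) / s)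
      (nhdsWithin 0 (Set.Ioi 0)) (nhds 0) :=
  stmt_16_general N hN c τ hc hτ u hu hgb x m
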